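/- Let (Z, E) be a reflexive graph whose relation E is antisymmetric. Then for every z ∈ Z, z_s ⊓ z_r < z_s in the concept lattice of the associated polarity, and every concept c with c < z_s satisfies c ≤ z_s ⊓ z_r; hence z_s is completely join-irreducible. -/

import Mathlib

open Set

/-- The object concept `z_s = ({z}^{↑↓}, {z}^↑)`. -/
def objectConcept {A X : Type*} (I : A → X → Prop) (a : A) : Concept A X I where
  extent := lowerPolar I (upperPolar I {a})
  intent := upperPolar I {a}
  upperPolar_extent := _root_.upperPolar_lowerPolar_upperPolar I {a}
  lowerPolar_intent := rfl

/-- The attribute concept `z_r = ({z}^↓, {z}^{↓↑})`. -/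
def attributeConcept {A X : Type*} (I : A → X → Prop) (x : X) : Concept A X I where
  extent := lowerPolar I {x}
  intent := upperPolar I (lowerPolar I {x})
  upperPolar_extent := rfl
  lowerPolar_intent := _root_.lowerPolar_upperPolar_lowerPolar I {x}

/-! An object `b` in the extent of `z_s` satisfies `E z b`: otherwise `b` lies in the intent
`{z}^↑ = {x | ¬ E z x}` and would have to satisfy `¬ E b b`. So if a concept `c < z_s` had an
object `b` with `E b z`, antisymmetry would force `b = z`, putting `z` into the extent of `c` and
`z_s ≤ c`. Hence every concept strictly below `z_s` lies below `z_r`, while `z_s` itself does not,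
since `E z z`. -/

section Polarity

variable {A X : Type*} {I : A → X → Prop}

theorem objectConcept_eq_ofObject (a : A) : objectConcept I a = Concept.ofObject I a :=
  Concept.ext rfl

theorem attributeConcept_eq_ofAttribute (x : X) :
    attributeConcept I x = Concept.ofAttribute I x :=
  Concept.ext rfl

theorem objectConcept_le_iff {a : A} {c : Concept A X I} :
    objectConcept I a ≤ c ↔ a ∈ c.extent := by
  rw [objectConcept_eq_ofObject, Concept.ofObjects_le_iff, singleton_subset_iff]

theorem le_attributeConcept_iff {x : X} {c : Concept A X I} :
    c ≤ attributeConcept I x ↔ x ∈ c.intent := by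
  rw [attributeConcept_eq_ofAttribute, Concept.le_ofAttributes_iff, singleton_subset_iff]

theorem objectConcept_le_attributeConcept_iff {a : A} {x : X} :
    objectConcept I a ≤ attributeConcept I x ↔ I a x := by
  rw [objectConcept_eq_ofObject, attributeConcept_eq_ofAttribute,
    Concept.ofObject_le_ofAttribute_iff]

theorem notMem_extent_of_lt_objectConcept {a : A} {c : Concept A X I}
    (hc : c < objectConcept I a) : a ∉ c.extent :=
  fun ha => hc.not_ge (objectConcept_le_iff.2 ha)

end Polarity

section ReflexiveGraph

variable {Z : Type*} {E : Z → Z → Prop}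

theorem objectConcept_inf_attributeConcept_lt (hrefl : ∀ a, E a a) (z : Z) :
    objectConcept (fun a x => ¬ E a x) z ⊓ attributeConcept (fun a x => ¬ E a x) z <
      objectConcept (fun a x => ¬ E a x) z :=
  inf_lt_left.2 fun h => objectConcept_le_attributeConcept_iff.1 h (hrefl z)

theorem adj_of_mem_extent_objectConcept (hrefl : ∀ a, E a a) {z b : Z}
    (hb : b ∈ (objectConcept (fun a x => ¬ E a x) z).extent) : E z b := by
  by_contra hzb
  exact hb ((mem_upperPolar_singleton _).2 hzb) (hrefl b)

theorem le_attributeConcept_of_lt_objectConcept (hrefl : ∀ a, E a a)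
    (hanti : ∀ z z' : Z, E z z' → E z' z → z = z') {z : Z}
    {c : Concept Z Z (fun a x => ¬ E a x)} (hc : c < objectConcept (fun a x => ¬ E a x) z) :
    c ≤ attributeConcept (fun a x => ¬ E a x) z := by
  rw [le_attributeConcept_iff, ← c.upperPolar_extent]
  intro b hb hbz
  obtain rfl : b = z := hanti b z hbz (adj_of_mem_extent_objectConcept hrefl (hc.le hb))
  exact notMem_extent_of_lt_objectConcept hc hb

end ReflexiveGraph

/-- For a reflexive, antisymmetric graph `(Z, E)` and any `z`, the concept `z_s ⊓ z_r` is
strictly below `z_s`, and every concept strictly below `z_s` lies below `z_s ⊓ z_r`;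
hence `z_s` is completely join-irreducible (it has a greatest strictly smaller element). -/
theorem objectConcept_completely_join_irreducible {Z : Type*} (E : Z → Z → Prop)
    (hrefl : Reflexive E)
    (hanti : ∀ z z' : Z, E z z' → E z' z → z = z') (z : Z) :
    objectConcept (fun a x => ¬ E a x) z ⊓ attributeConcept (fun a x => ¬ E a x) z <
        objectConcept (fun a x => ¬ E a x) z ∧
    (∀ c : Concept Z Z (fun a x => ¬ E a x),
      c < objectConcept (fun a x => ¬ E a x) z →
        c ≤ objectConcept (fun a x => ¬ E a x) z ⊓ attributeConcept (fun a x => ¬ E a x) z) ∧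
    ∃ m : Concept Z Z (fun a x => ¬ E a x),
      IsGreatest {c : Concept Z Z (fun a x => ¬ E a x) |
        c < objectConcept (fun a x => ¬ E a x) z} m := by
  have hlt := objectConcept_inf_attributeConcept_lt hrefl z
  have hmax : ∀ c : Concept Z Z (fun a x => ¬ E a x), c < objectConcept (fun a x => ¬ E a x) z →
      c ≤ objectConcept (fun a x => ¬ E a x) z ⊓ attributeConcept (fun a x => ¬ E a x) z :=
    fun c hc => le_inf hc.le (le_attributeConcept_of_lt_objectConcept hrefl hanti hc)
  exact ⟨hlt, hmax, _, hlt, hmax⟩
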